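/- arXiv:2105.08025 — 2 statements merged into one kernel-verified Lean document; each statement's English description precedes it below -/
import Mathlib

section
/- For integers i with 1 ≤ i ≤ n and an n-simplex x, ∂(Δ_i(x)) + Δ_i(∂x) = Σ_{U ∈ P_{n-i}(n)} Σ_{ū ∈ {0,...,n}∖U} ( d_{ū.U^0}(x) ⊗ d_{U^1}(x) + d_{U^0}(x) ⊗ d_{ū.U^1}(x) ) over 𝔽₂. -/
open scoped TensorProduct

def posIn (S : Finset ℕ) (u : ℕ) : ℕ := (S.filter (fun v => v ≤ u)).card
def idxFun (U : Finset ℕ) (u : ℕ) : ℕ := (u + posIn U u) % 2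
def part0 (U : Finset ℕ) : Finset ℕ := U.filter (fun u => idxFun U u = 0)
def part1 (U : Finset ℕ) : Finset ℕ := U.filter (fun u => idxFun U u = 1)

variable {V : Type} [LinearOrder V]

/-- `dFace U x` deletes from the simplex `x` the vertices in (0-based) positions `U`. -/
def dFace (U : Finset ℕ) (x : Finset V) : Finset V :=
  ((((x.sort (· ≤ ·)).zipIdx).filter (fun p => decide (p.2 ∉ U))).map Prod.fst).toFinset

/-- Mod 2 simplicial chains: the free `𝔽₂`-module on simplices (finite subsets of `V`). -/
abbrev Chains (V : Type) [LinearOrder V] := Finset V →₀ ZMod 2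


noncomputable instance {V : Type} [LinearOrder V] :
    Zero (TensorProduct (ZMod 2) (Chains V) (Chains V)) :=
  (inferInstance : AddCommMonoid (TensorProduct (ZMod 2) (Chains V) (Chains V))).toAddMonoid.toZero

/-- Basis chain corresponding to a simplex. -/
noncomputable def eC (x : Finset V) : Chains V := Finsupp.single x 1

/-- The cup-`i` coproduct on a basis simplex. -/
noncomputable def deltaSimplex (i : ℤ) (x : Finset V) :
    TensorProduct (ZMod 2) (Chains V) (Chains V) :=
  if 0 ≤ i ∧ i ≤ (x.card : ℤ) - 1 then
    ∑ U ∈ Finset.powersetCard (x.card - 1 - i.toNat) (Finset.range x.card),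
      eC (dFace (part0 U) x) ⊗ₜ[ZMod 2] eC (dFace (part1 U) x)
  else (0 : TensorProduct (ZMod 2) (Chains V) (Chains V))

/-- The cup-`i` coproduct `Δᵢ`, as a linear map on chains. -/
noncomputable def deltaMap (V : Type) [LinearOrder V] (i : ℤ) :
    Chains V →ₗ[ZMod 2] TensorProduct (ZMod 2) (Chains V) (Chains V) :=
  Finsupp.lift _ (ZMod 2) (Finset V) (deltaSimplex i)

/-- Mod 2 boundary of a basis simplex. -/
noncomputable def bdSimplex (x : Finset V) : Chains V :=
  if 2 ≤ x.card then ∑ i ∈ Finset.range x.card, eC (dFace {i} x) else 0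

/-- Mod 2 simplicial boundary `∂ = Σ dᵢ`. -/
noncomputable def bdMap (V : Type) [LinearOrder V] : Chains V →ₗ[ZMod 2] Chains V :=
  Finsupp.lift _ (ZMod 2) (Finset V) bdSimplex

/-- Boundary on the tensor product: `∂(a⊗b) = ∂a⊗b + a⊗∂b` (signs trivial mod 2). -/
noncomputable def bdT (V : Type) [LinearOrder V] :
    TensorProduct (ZMod 2) (Chains V) (Chains V) →ₗ[ZMod 2]
      TensorProduct (ZMod 2) (Chains V) (Chains V) :=
  TensorProduct.map (bdMap V) LinearMap.id + TensorProduct.map LinearMap.id (bdMap V)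

/-- Transposition of tensor factors `T(a⊗b) = b⊗a`. -/
noncomputable def transp (V : Type) [LinearOrder V] :
    TensorProduct (ZMod 2) (Chains V) (Chains V) →ₗ[ZMod 2]
      TensorProduct (ZMod 2) (Chains V) (Chains V) :=
  (TensorProduct.comm (ZMod 2) (Chains V) (Chains V)).toLinearMap

/-- Chain map induced by a simplicial (monotone) map `f`. -/
noncomputable def fChain {W : Type} [LinearOrder W] (f : V → W) :
    Chains V →ₗ[ZMod 2] Chains W :=
  Finsupp.lift _ (ZMod 2) (Finset V)
    (fun x => if (x.image f).card = x.card then eC (x.image f) else 0)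

/-- Evaluation of a cochain on chains. -/
noncomputable def evalCochain (α : Finset V → ZMod 2) : Chains V →ₗ[ZMod 2] ZMod 2 :=
  Finsupp.lift _ (ZMod 2) (Finset V) α

/-- Evaluation of a tensor of cochains on a tensor of chains. -/
noncomputable def pairing (α β : Finset V → ZMod 2) :
    TensorProduct (ZMod 2) (Chains V) (Chains V) →ₗ[ZMod 2] ZMod 2 :=
  (LinearMap.mul' (ZMod 2) (ZMod 2)) ∘ₗ TensorProduct.map (evalCochain α) (evalCochain β)

/-- Indicator cochain of a single simplex. -/
def indC (a : Finset V) : Finset V → ZMod 2 := fun y => if y = a then 1 else 0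


/-!
Write `Δᵢ x = Σ_U d_{U⁰}x ⊗ d_{U¹}x`. By the Leibniz rule the boundary of a summand is
`Σ_{u ∉ U⁰} d_{u.U⁰}x ⊗ d_{U¹}x + Σ_{u ∉ U¹} d_{U⁰}x ⊗ d_{u.U¹}x`, and its terms with `u ∈ U`
are exactly `d_{u.U⁰}x ⊗ d_{u.U¹}x`, `u ∈ U`. On the other side, `Δᵢ(∂x) = Σ_j Δᵢ(d_j x)` is a
sum over pairs `(j, W)`; composing faces, `d_W d_j = d_U` with `U = j.σ_j(W)` (`σ_j` skipping
`j`), and `(j, W) ↦ (U, j)` is a bijection onto the pairs `(U, u)` with `u ∈ U`. Inserting `j`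
shifts each element above `j` and its index in the set by one, so the parity classes of the old
elements are unchanged and the `(j, W)` term is `d_{j.U⁰}x ⊗ d_{j.U¹}x`. Over `𝔽₂` these terms
cancel against those of the boundary, leaving the terms with `u ∉ U`.
-/

open Finset

section Faces

/-- Position of the vertex `v` in the simplex `x`, counted from `0` as in `dFace`. -/
def vertexRank (x : Finset V) (v : V) : ℕ := #{w ∈ x | w < v}

lemma vertexRank_orderEmbOfFin (x : Finset V) {N : ℕ} (h : #x = N) (i : Fin N) :
    vertexRank x (x.orderEmbOfFin h i) = i := by
  have : {w ∈ x | w < x.orderEmbOfFin h i} = (Iio i).map (x.orderEmbOfFin h).toEmbedding := by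
    ext w
    simp only [mem_filter, mem_map, mem_Iio, RelEmbedding.coe_toEmbedding]
    constructor
    · rintro ⟨hw, hlt⟩
      obtain ⟨j, rfl⟩ : w ∈ Set.range (x.orderEmbOfFin h) := by
        rw [range_orderEmbOfFin]; exact hw
      exact ⟨j, (OrderEmbedding.lt_iff_lt _).mp hlt, rfl⟩
    · rintro ⟨j, hj, rfl⟩
      exact ⟨x.orderEmbOfFin_mem h j, (OrderEmbedding.lt_iff_lt _).mpr hj⟩
  rw [vertexRank, this, card_map, Fin.card_Iio]

lemma exists_orderEmbOfFin_eq {x : Finset V} {v : V} (hv : v ∈ x) :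
    ∃ i : Fin #x, x.orderEmbOfFin rfl i = v := by
  rw [← Set.mem_range, range_orderEmbOfFin]; exact hv

lemma vertexRank_lt_card {x : Finset V} {v : V} (hv : v ∈ x) : vertexRank x v < #x :=
  card_lt_card (filter_ssubset.mpr ⟨v, hv, lt_irrefl v⟩)

lemma strictMonoOn_vertexRank (x : Finset V) : StrictMonoOn (vertexRank x) x := by
  intro v hv w hw hvw
  refine card_lt_card ((ssubset_iff_of_subset ?_).mpr ⟨v, ?_, ?_⟩)
  · intro u hu
    simp only [mem_filter] at hu ⊢
    exact ⟨hu.1, hu.2.trans hvw⟩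
  · simpa using ⟨hv, hvw⟩
  · simp

lemma vertexRank_injOn (x : Finset V) : Set.InjOn (vertexRank x) x :=
  (strictMonoOn_vertexRank x).injOn

lemma mem_dFace {S : Finset ℕ} {x : Finset V} {v : V} :
    v ∈ dFace S x ↔ v ∈ x ∧ vertexRank x v ∉ S := by
  simp only [dFace, List.mem_toFinset, List.mem_map, List.mem_filter,
    List.mem_zipIdx_iff_getElem?, decide_eq_true_eq, List.getElem?_eq_some_iff, length_sort]
  constructor
  · rintro ⟨⟨w, i⟩, ⟨⟨hi, hw⟩, hS⟩, rfl⟩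
    dsimp only at hi hw hS ⊢
    obtain rfl : x.orderEmbOfFin rfl ⟨i, hi⟩ = w := by rw [orderEmbOfFin_apply]; exact hw
    rw [vertexRank_orderEmbOfFin]
    exact ⟨x.orderEmbOfFin_mem rfl _, hS⟩
  · rintro ⟨hv, hS⟩
    obtain ⟨i, rfl⟩ := exists_orderEmbOfFin_eq hv
    rw [vertexRank_orderEmbOfFin] at hS
    exact ⟨(_, i), ⟨⟨i.2, (orderEmbOfFin_apply x rfl i).symm⟩, hS⟩, rfl⟩

lemma dFace_eq_filter (S : Finset ℕ) (x : Finset V) :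
    dFace S x = {v ∈ x | vertexRank x v ∉ S} := by
  ext v; rw [mem_dFace, mem_filter]

lemma card_filter_vertexRank (x : Finset V) (p : ℕ → Prop) [DecidablePred p] :
    #{v ∈ x | p (vertexRank x v)} = #{k ∈ range #x | p k} := by
  rw [← card_image_of_injOn ((vertexRank_injOn x).mono (filter_subset _ _))]
  congr 1
  ext k
  simp only [mem_image, mem_filter, mem_range]
  constructor
  · rintro ⟨v, ⟨hv, hp⟩, rfl⟩
    exact ⟨vertexRank_lt_card hv, hp⟩
  · rintro ⟨hk, hp⟩
    refine ⟨x.orderEmbOfFin rfl ⟨k, hk⟩, ?_⟩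
    rw [vertexRank_orderEmbOfFin]
    exact ⟨⟨x.orderEmbOfFin_mem rfl _, hp⟩, rfl⟩

/-- The position of `k` in the complement of `S`: `d_S` moves the vertex in position `k ∉ S`
to position `rankCompl S k`. -/
def rankCompl (S : Finset ℕ) (k : ℕ) : ℕ := #{m ∈ range k | m ∉ S}

lemma rankCompl_of_subset_range {N : ℕ} {S : Finset ℕ} (hS : S ⊆ range N) :
    rankCompl S N = N - #S := by
  rw [rankCompl, filter_not, filter_mem_eq_inter, inter_eq_right.mpr hS,
    card_sdiff_of_subset hS, card_range]

lemma card_dFace {S : Finset ℕ} (x : Finset V) (hS : S ⊆ range #x) :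
    #(dFace S x) = #x - #S := by
  rw [dFace_eq_filter, card_filter_vertexRank x (· ∉ S)]
  exact rankCompl_of_subset_range hS

end Faces

section Composition

lemma strictMonoOn_rankCompl (S : Finset ℕ) : StrictMonoOn (rankCompl S) {k | k ∉ S} := by
  intro a ha b _ hab
  refine card_lt_card ((ssubset_iff_of_subset ?_).mpr ⟨a, ?_, ?_⟩)
  · exact filter_subset_filter _ (range_subset_range.mpr hab.le)
  · simpa using ⟨hab, ha⟩
  · simp

lemma rankCompl_range_sdiff {N : ℕ} {S : Finset ℕ} (hS : S ⊆ range N) :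
    (range N \ S).image (rankCompl S) = range (N - #S) := by
  have hinj : Set.InjOn (rankCompl S) ↑(range N \ S) :=
    (strictMonoOn_rankCompl S).injOn.mono fun k hk => (mem_sdiff.mp hk).2
  refine eq_of_subset_of_card_le (fun k hk => ?_) ?_
  · obtain ⟨u, hu, rfl⟩ := mem_image.mp hk
    obtain ⟨huN, huS⟩ := mem_sdiff.mp hu
    rw [mem_range, ← rankCompl_of_subset_range hS]
    exact strictMonoOn_rankCompl S huS (fun h => by simpa using hS h) (mem_range.mp huN)
  · rw [card_image_of_injOn hinj, card_sdiff_of_subset hS, card_range, card_range]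

variable (S : Finset ℕ) (x : Finset V)

lemma vertexRank_dFace {v : V} (hv : v ∈ x) :
    vertexRank (dFace S x) v = rankCompl S (vertexRank x v) := by
  have hlt : ∀ w ∈ x, (vertexRank x w ∉ S ∧ w < v) ↔
      (vertexRank x w ∉ S ∧ vertexRank x w < vertexRank x v) := fun w hw =>
    and_congr_right' ((strictMonoOn_vertexRank x).lt_iff_lt hw hv).symm
  rw [vertexRank, dFace_eq_filter, filter_filter, filter_congr hlt,
    card_filter_vertexRank x (fun k => k ∉ S ∧ k < vertexRank x v), rankCompl]
  congr 1
  ext k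
  simp only [mem_filter, mem_range]
  constructor
  · rintro ⟨_, hkS, hk⟩
    exact ⟨hk, hkS⟩
  · rintro ⟨hk, hkS⟩
    exact ⟨hk.trans (vertexRank_lt_card hv), hkS, hk⟩

lemma dFace_dFace (T : Finset ℕ) :
    dFace T (dFace S x) =
      {v ∈ x | vertexRank x v ∉ S ∧ rankCompl S (vertexRank x v) ∉ T} := by
  rw [dFace_eq_filter T, dFace_eq_filter S, filter_filter]
  refine filter_congr fun v hv => and_congr_right fun _ => ?_
  rw [← dFace_eq_filter, vertexRank_dFace S x hv]

lemma dFace_rankCompl_dFace {u : ℕ} (hu : u ∉ S) :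
    dFace {rankCompl S u} (dFace S x) = dFace (insert u S) x := by
  rw [dFace_dFace, dFace_eq_filter]
  refine filter_congr fun v _ => ?_
  simp only [mem_insert, mem_singleton, not_or]
  constructor
  · rintro ⟨hvS, hvu⟩
    exact ⟨fun h => hvu (h ▸ rfl), hvS⟩
  · rintro ⟨hvu, hvS⟩
    exact ⟨hvS, fun h => hvu ((strictMonoOn_rankCompl S).injOn hvS hu h)⟩

end Composition

section SuccAbove

def succAboveNat (j w : ℕ) : ℕ := if w < j then w else w + 1

def predAboveNat (j k : ℕ) : ℕ := if k < j then k else k - 1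

lemma succAboveNat_ne (j w : ℕ) : succAboveNat j w ≠ j := by
  unfold succAboveNat; split_ifs <;> omega

lemma predAboveNat_succAboveNat (j w : ℕ) : predAboveNat j (succAboveNat j w) = w := by
  unfold succAboveNat predAboveNat; split_ifs <;> omega

lemma succAboveNat_predAboveNat {j k : ℕ} (h : k ≠ j) : succAboveNat j (predAboveNat j k) = k := by
  unfold succAboveNat predAboveNat; split_ifs <;> omega

lemma leftInvOn_succAboveNat_predAboveNat (j : ℕ) (U : Finset ℕ) :
    Set.LeftInvOn (succAboveNat j) (predAboveNat j) ↑(U.erase j) := fun _ hk =>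
  succAboveNat_predAboveNat (ne_of_mem_erase hk)

lemma succAboveNat_injective (j : ℕ) : Function.Injective (succAboveNat j) :=
  Function.LeftInverse.injective (predAboveNat_succAboveNat j)

lemma succAboveNat_le_succAboveNat_iff (j a w : ℕ) :
    succAboveNat j a ≤ succAboveNat j w ↔ a ≤ w := by
  unfold succAboveNat; split_ifs <;> omega

lemma notMem_image_succAboveNat (j : ℕ) (W : Finset ℕ) : j ∉ W.image (succAboveNat j) := by
  simpa using fun w _ => succAboveNat_ne j w

lemma mem_image_succAboveNat {j k : ℕ} (T : Finset ℕ) (h : k ≠ j) :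
    k ∈ T.image (succAboveNat j) ↔ predAboveNat j k ∈ T := by
  rw [mem_image]
  constructor
  · rintro ⟨w, hw, rfl⟩
    rwa [predAboveNat_succAboveNat]
  · exact fun hk => ⟨_, hk, succAboveNat_predAboveNat h⟩

lemma rankCompl_singleton {j k : ℕ} (h : k ≠ j) : rankCompl {j} k = predAboveNat j k := by
  have : {m ∈ range k | m ∉ ({j} : Finset ℕ)} = (range k).erase j := by
    ext m; simp [and_comm]
  rw [rankCompl, this, card_erase_eq_ite, card_range, predAboveNat]
  split_ifs <;> simp_all <;> omega

lemma dFace_dFace_singleton (T : Finset ℕ) (j : ℕ) (x : Finset V) :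
    dFace T (dFace {j} x) = dFace (insert j (T.image (succAboveNat j))) x := by
  rw [dFace_dFace, dFace_eq_filter]
  refine filter_congr fun v _ => ?_
  simp only [mem_insert, mem_singleton, not_or]
  refine and_congr_right fun hj => ?_
  rw [rankCompl_singleton hj, mem_image_succAboveNat T hj]

end SuccAbove

section Parity

lemma part0_union_part1 (U : Finset ℕ) : part0 U ∪ part1 U = U := by
  rw [part0, part1, ← filter_or]
  exact filter_true_of_mem fun u _ => Nat.mod_two_eq_zero_or_one _

lemma disjoint_part0_part1 (U : Finset ℕ) : Disjoint (part0 U) (part1 U) :=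
  disjoint_filter.mpr fun _ _ h0 h1 => by omega

lemma posIn_insert_image_succAboveNat (j : ℕ) (W : Finset ℕ) (w : ℕ) :
    posIn (insert j (W.image (succAboveNat j))) (succAboveNat j w) =
      posIn W w + if j ≤ w then 1 else 0 := by
  have himage : {v ∈ W.image (succAboveNat j) | v ≤ succAboveNat j w} =
      {v ∈ W | v ≤ w}.image (succAboveNat j) := by
    simp only [filter_image, succAboveNat_le_succAboveNat_iff]
  have hj : j ≤ succAboveNat j w ↔ j ≤ w := by unfold succAboveNat; split_ifs <;> omega
  rw [posIn, posIn, filter_insert, himage]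
  by_cases h : j ≤ w
  · rw [if_pos (hj.mpr h), if_pos h, card_insert_of_notMem (notMem_image_succAboveNat j _),
      card_image_of_injective _ (succAboveNat_injective j)]
  · rw [if_neg (mt hj.mp h), if_neg h, card_image_of_injective _ (succAboveNat_injective j),
      add_zero]

lemma idxFun_insert_image_succAboveNat (j : ℕ) (W : Finset ℕ) (w : ℕ) :
    idxFun (insert j (W.image (succAboveNat j))) (succAboveNat j w) = idxFun W w := by
  rw [idxFun, idxFun, posIn_insert_image_succAboveNat]
  unfold succAboveNat
  split_ifs <;> omega

lemma insert_filter_idxFun_insert_image (j c : ℕ) (W : Finset ℕ) :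
    insert j {u ∈ insert j (W.image (succAboveNat j)) |
        idxFun (insert j (W.image (succAboveNat j))) u = c} =
      insert j ({w ∈ W | idxFun W w = c}.image (succAboveNat j)) := by
  rw [filter_insert, filter_image]
  simp only [idxFun_insert_image_succAboveNat]
  split_ifs <;> simp

end Parity

section Chains

lemma sum_sdiff_eq_sum_sdiff_union_add {ι M : Type*} [DecidableEq ι] [AddCommMonoid M]
    {R A B : Finset ι} (hAB : Disjoint A B) (hB : B ⊆ R) (f : ι → M) :
    ∑ u ∈ R \ A, f u = ∑ u ∈ R \ (A ∪ B), f u + ∑ u ∈ B, f u := by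
  rw [← sup_eq_union, ← sdiff_sdiff_left, sum_sdiff (subset_sdiff.mpr ⟨hB, hAB.symm⟩)]

lemma lift_eC {M : Type*} [AddCommMonoid M] [Module (ZMod 2) M] (g : Finset V → M)
    (y : Finset V) : Finsupp.lift M (ZMod 2) (Finset V) g (eC y) = g y := by
  rw [eC, Finsupp.lift_apply, Finsupp.sum_single_index (zero_smul _ (g y)), one_smul]

/-- `ZModModule.add_self` does not fire under `rw` on the tensor product of chains, whose
addition comes from its `AddCommMonoid` instance. -/
lemma add_self_of_zmod_two {M : Type*} [AddCommMonoid M] [Module (ZMod 2) M] (m : M) :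
    m + m = 0 := by
  rw [← two_smul (ZMod 2), show (2 : ZMod 2) = 0 from rfl, zero_smul]

lemma bdMap_eC (y : Finset V) : bdMap V (eC y) = bdSimplex y := lift_eC _ _

lemma deltaMap_eC (i : ℤ) (y : Finset V) : deltaMap V i (eC y) = deltaSimplex i y :=
  lift_eC _ _

lemma bdT_tmul (a b : Chains V) :
    bdT V (a ⊗ₜ[ZMod 2] b) = bdMap V a ⊗ₜ[ZMod 2] b + a ⊗ₜ[ZMod 2] bdMap V b := by
  simp only [bdT, LinearMap.add_apply, TensorProduct.map_tmul, LinearMap.id_apply]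

lemma bdMap_eC_dFace {S : Finset ℕ} {x : Finset V} (hS : S ⊆ range #x) (hcard : #S + 2 ≤ #x) :
    bdMap V (eC (dFace S x)) = ∑ u ∈ range #x \ S, eC (dFace (insert u S) x) := by
  have hinj : Set.InjOn (rankCompl S) ↑(range #x \ S) :=
    (strictMonoOn_rankCompl S).injOn.mono fun k hk => (mem_sdiff.mp hk).2
  rw [bdMap_eC, bdSimplex, if_pos (by rw [card_dFace x hS]; omega), card_dFace x hS,
    ← rankCompl_range_sdiff hS, sum_image hinj]
  exact sum_congr rfl fun u hu => congrArg eC (dFace_rankCompl_dFace S x (mem_sdiff.mp hu).2)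

lemma deltaSimplex_of_card_eq {m i : ℕ} (hi : i ≤ m) {y : Finset V} (hy : #y = m + 1) :
    deltaSimplex i y = ∑ U ∈ powersetCard (m - i) (range (m + 1)),
      eC (dFace (part0 U) y) ⊗ₜ[ZMod 2] eC (dFace (part1 U) y) := by
  rw [deltaSimplex, if_pos ⟨Int.natCast_nonneg i, by rw [hy]; push_cast; omega⟩, hy,
    Int.toNat_natCast, Nat.add_sub_cancel]

lemma deltaSimplex_of_card_le {i : ℕ} {y : Finset V} (hy : #y ≤ i) : deltaSimplex i y = 0 :=
  if_neg fun h => by omega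

end Chains

section Reindexing

lemma insert_image_succAboveNat_mem_powersetCard {n k j : ℕ} (hj : j < n + 1) {W : Finset ℕ}
    (hW : W ∈ powersetCard k (range n)) :
    insert j (W.image (succAboveNat j)) ∈ powersetCard (k + 1) (range (n + 1)) := by
  obtain ⟨hWs, hWc⟩ := mem_powersetCard.mp hW
  refine mem_powersetCard.mpr ⟨insert_subset (mem_range.mpr hj) fun u hu => ?_, ?_⟩
  · obtain ⟨w, hw, rfl⟩ := mem_image.mp hu
    have := mem_range.mp (hWs hw)
    rw [mem_range]; unfold succAboveNat; split_ifs <;> omega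
  · rw [card_insert_of_notMem (notMem_image_succAboveNat _ _),
      card_image_of_injective _ (succAboveNat_injective _), hWc]

lemma image_predAboveNat_erase_mem_powersetCard {n k j : ℕ} (hj : j < n + 1) {U : Finset ℕ}
    (hU : U ∈ powersetCard (k + 1) (range (n + 1))) (hjU : j ∈ U) :
    (U.erase j).image (predAboveNat j) ∈ powersetCard k (range n) := by
  obtain ⟨hUs, hUc⟩ := mem_powersetCard.mp hU
  refine mem_powersetCard.mpr ⟨fun k hk => ?_, ?_⟩
  · obtain ⟨u, hu, rfl⟩ := mem_image.mp hk
    have := mem_range.mp (hUs (mem_of_mem_erase hu))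
    have := ne_of_mem_erase hu
    rw [mem_range]; unfold predAboveNat; split_ifs <;> omega
  · rw [card_image_of_injOn (leftInvOn_succAboveNat_predAboveNat j U).injOn,
      card_erase_of_mem hjU, hUc, Nat.add_sub_cancel]

lemma sum_powersetCard_succ_sum_mem {M : Type*} [AddCommMonoid M] (n k : ℕ)
    (f : Finset ℕ → ℕ → M) :
    ∑ U ∈ powersetCard (k + 1) (range (n + 1)), ∑ u ∈ U, f U u =
      ∑ j ∈ range (n + 1), ∑ W ∈ powersetCard k (range n),
        f (insert j (W.image (succAboveNat j))) j := by
  rw [sum_comm' (t' := range (n + 1))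
    (s' := fun j => {U ∈ powersetCard (k + 1) (range (n + 1)) | j ∈ U})
    (fun U u => by simp only [mem_filter, mem_powersetCard]; grind)]
  refine sum_congr rfl fun j hj => (sum_nbij'
    (fun W : Finset ℕ => insert j (W.image (succAboveNat j)))
    (fun U : Finset ℕ => (U.erase j).image (predAboveNat j)) (fun W hW => ?_) (fun U hU => ?_)
    (fun W _ => ?_) (fun U hU => ?_) fun _ _ => rfl).symm
  · exact mem_filter.mpr ⟨insert_image_succAboveNat_mem_powersetCard (mem_range.mp hj) hW,
      mem_insert_self _ _⟩
  · obtain ⟨hU, hjU⟩ := mem_filter.mp hU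
    exact image_predAboveNat_erase_mem_powersetCard (mem_range.mp hj) hU hjU
  · rw [erase_insert (notMem_image_succAboveNat _ _), image_image,
      show predAboveNat j ∘ succAboveNat j = id from funext (predAboveNat_succAboveNat j),
      image_id]
  · rw [image_image, image_congr (leftInvOn_succAboveNat_predAboveNat j U).eqOn, image_id,
      insert_erase (mem_filter.mp hU).2]

end Reindexing

section Boundary

variable (x : Finset V)

lemma tmul_dFace_part_dFace_singleton (j : ℕ) (W : Finset ℕ) :
    eC (dFace (part0 W) (dFace {j} x)) ⊗ₜ[ZMod 2] eC (dFace (part1 W) (dFace {j} x)) =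
      eC (dFace (insert j (part0 (insert j (W.image (succAboveNat j))))) x) ⊗ₜ[ZMod 2]
        eC (dFace (insert j (part1 (insert j (W.image (succAboveNat j))))) x) := by
  rw [dFace_dFace_singleton, dFace_dFace_singleton]
  unfold part0 part1
  rw [insert_filter_idxFun_insert_image, insert_filter_idxFun_insert_image]

lemma deltaMap_bdMap_eC {n i : ℕ} (hn : 1 ≤ n) (hi : i ≤ n) (hx : #x = n + 1) :
    deltaMap V i (bdMap V (eC x)) =
      ∑ U ∈ powersetCard (n - i) (range (n + 1)), ∑ u ∈ U,
        eC (dFace (insert u (part0 U)) x) ⊗ₜ[ZMod 2] eC (dFace (insert u (part1 U)) x) := by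
  have hface : ∀ j ∈ range (n + 1), #(dFace {j} x) = n := fun j hj => by
    rw [card_dFace x (by simpa [hx] using hj), hx, card_singleton, Nat.add_sub_cancel]
  rw [bdMap_eC, bdSimplex, if_pos (by omega), map_sum, hx]
  obtain hin | ⟨k, hk⟩ : n - i = 0 ∨ ∃ k, n - i = k + 1 :=
    (n - i).eq_zero_or_eq_succ_pred.imp id fun h => ⟨_, h⟩
  · refine (sum_eq_zero fun j hj => ?_).trans (sum_eq_zero fun U hU => ?_).symm
    · rw [deltaMap_eC, deltaSimplex_of_card_le (by rw [hface j hj]; omega)]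
    · rw [hin, powersetCard_zero, mem_singleton] at hU
      rw [hU, sum_empty]
  · rw [hk, sum_powersetCard_succ_sum_mem n k]
    refine sum_congr rfl fun j hj => ?_
    have hcard : #(dFace {j} x) = n - 1 + 1 := by rw [hface j hj]; omega
    rw [deltaMap_eC, deltaSimplex_of_card_eq (by omega) hcard, Nat.sub_add_cancel hn,
      show n - 1 - i = k by omega]
    exact sum_congr rfl fun W _ => tmul_dFace_part_dFace_singleton x j W

lemma bdT_tmul_dFace_part_add_sum {U : Finset ℕ} (hU : U ⊆ range #x) (hcard : #U + 2 ≤ #x) :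
    bdT V (eC (dFace (part0 U) x) ⊗ₜ[ZMod 2] eC (dFace (part1 U) x)) +
        ∑ u ∈ U, eC (dFace (insert u (part0 U)) x) ⊗ₜ[ZMod 2]
          eC (dFace (insert u (part1 U)) x) =
      ∑ u ∈ range #x \ U,
        (eC (dFace (insert u (part0 U)) x) ⊗ₜ[ZMod 2] eC (dFace (part1 U) x) +
          eC (dFace (part0 U) x) ⊗ₜ[ZMod 2] eC (dFace (insert u (part1 U)) x)) := by
  set f₀ : ℕ → TensorProduct (ZMod 2) (Chains V) (Chains V) := fun u =>
    eC (dFace (insert u (part0 U)) x) ⊗ₜ[ZMod 2] eC (dFace (part1 U) x)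
  set f₁ : ℕ → TensorProduct (ZMod 2) (Chains V) (Chains V) := fun u =>
    eC (dFace (part0 U) x) ⊗ₜ[ZMod 2] eC (dFace (insert u (part1 U)) x)
  have h₀ : part0 U ⊆ U := filter_subset _ _
  have h₁ : part1 U ⊆ U := filter_subset _ _
  have hbd : bdT V (eC (dFace (part0 U) x) ⊗ₜ[ZMod 2] eC (dFace (part1 U) x)) =
      (∑ u ∈ range #x \ U, f₀ u + ∑ u ∈ part1 U, f₀ u) +
        (∑ u ∈ range #x \ U, f₁ u + ∑ u ∈ part0 U, f₁ u) := by
    rw [bdT_tmul, bdMap_eC_dFace (h₀.trans hU) (by grw [h₀]; omega),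
      bdMap_eC_dFace (h₁.trans hU) (by grw [h₁]; omega), TensorProduct.sum_tmul,
      TensorProduct.tmul_sum,
      sum_sdiff_eq_sum_sdiff_union_add (disjoint_part0_part1 U) (h₁.trans hU),
      sum_sdiff_eq_sum_sdiff_union_add (disjoint_part0_part1 U).symm (h₀.trans hU),
      part0_union_part1, union_comm, part0_union_part1]
  have hsum : ∑ u ∈ U, eC (dFace (insert u (part0 U)) x) ⊗ₜ[ZMod 2]
      eC (dFace (insert u (part1 U)) x) = ∑ u ∈ part0 U, f₁ u + ∑ u ∈ part1 U, f₀ u := by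
    conv_lhs => enter [1]; rw [← part0_union_part1 U]
    rw [sum_union (disjoint_part0_part1 U)]
    congr 1 <;> refine sum_congr rfl fun u hu => ?_ <;> rw [insert_eq_of_mem hu]
  rw [hbd, hsum, sum_add_distrib]
  calc _ = (∑ u ∈ range #x \ U, f₀ u + ∑ u ∈ range #x \ U, f₁ u) +
        ((∑ u ∈ part1 U, f₀ u + ∑ u ∈ part1 U, f₀ u) +
          (∑ u ∈ part0 U, f₁ u + ∑ u ∈ part0 U, f₁ u)) := by abel
    _ = _ := by rw [add_self_of_zmod_two, add_self_of_zmod_two, add_zero, add_zero]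

end Boundary

/-- for `1 ≤ i ≤ n` and an `n`-simplex `x`,
`∂(Δᵢ(x)) + Δᵢ(∂x) = Σ_{U ∈ P_{n-i}(n)} Σ_{ū ∉ U} ( d_{ū.U^0}(x) ⊗ d_{U^1}(x)
  + d_{U^0}(x) ⊗ d_{ū.U^1}(x) )` over `𝔽₂`. -/
theorem stmt_13 {V : Type} [LinearOrder V] (n i : ℕ) (hi1 : 1 ≤ i) (hi2 : i ≤ n)
    (x : Finset V) (hx : x.card = n + 1) :
    bdT V (deltaMap V (i : ℤ) (eC x)) + deltaMap V (i : ℤ) (bdMap V (eC x)) =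
      ∑ U ∈ Finset.powersetCard (n - i) (Finset.range (n + 1)),
        ∑ u ∈ Finset.range (n + 1) \ U,
          (eC (dFace (insert u (part0 U)) x) ⊗ₜ[ZMod 2] eC (dFace (part1 U) x) +
           eC (dFace (part0 U) x) ⊗ₜ[ZMod 2] eC (dFace (insert u (part1 U)) x)) := by
  rw [deltaMap_eC, deltaSimplex_of_card_eq hi2 hx, map_sum,
    deltaMap_bdMap_eC x (hi1.trans hi2) hi2 hx, ← sum_add_distrib]
  refine sum_congr rfl fun U hU => ?_
  obtain ⟨hUs, hUc⟩ := mem_powersetCard.mp hU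
  rw [← hx] at hUs ⊢
  exact bdT_tmul_dFace_part_add_sum x hUs (by omega)
end

section
/- For 1 ≤ q ≤ n and an n-simplex x, Σ_{U ∈ P_q(n), ū ∉ U} ( d_{ū.U^0}(x) ⊗ d_{U^1}(x) + d_{U^0}(x) ⊗ d_{ū.U^1}(x) ) = (1+T) Σ_{W ∈ P_{q+1}(n)} d_{W^0}(x) ⊗ d_{W^1}(x) over 𝔽₂, where T swaps tensor factors. -/
open scoped TensorProduct

variable {V : Type} [LinearOrder V]

/-!
Removing `u` from `W` keeps the index parity of the elements of `W` below `u` and flips it for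
those above. So if `g t` is the tensor built from the split of `W` whose parities are kept below
the threshold `t` and flipped from `t` on, the two terms indexed by `U = W \ {u}` and `ū = u` are
exactly `g u` and `g (u + 1)`. Since `g` only changes at elements of `W`, over `𝔽₂` the sum over
`u ∈ W` telescopes to `g 0 + g ∞ = d_{W^1} ⊗ d_{W^0} + d_{W^0} ⊗ d_{W^1}`, after regrouping the
left-hand side by `W = U ∪ {ū}`.
-/

namespace SplitParity

/-- `part W ε` is `W^ε`; `part0` and `part1` unfold to it by `rfl`. -/
def part (W : Finset ℕ) (ε : ℕ) : Finset ℕ := W.filter (fun u => idxFun W u = ε)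

def cutIdx (W : Finset ℕ) (t v : ℕ) : ℕ := (idxFun W v + if t ≤ v then 1 else 0) % 2

def cutPart (W : Finset ℕ) (t ε : ℕ) : Finset ℕ := W.filter (fun v => cutIdx W t v = ε)

lemma idxFun_erase {W : Finset ℕ} {u v : ℕ} (hu : u ∈ W) (hv : v ≠ u) :
    idxFun (W.erase u) v = (idxFun W v + if u < v then 1 else 0) % 2 := by
  have hpos : posIn (W.erase u) v = posIn W v - if u ≤ v then 1 else 0 := by
    unfold posIn
    rw [Finset.filter_erase]
    split_ifs with h
    · exact Finset.card_erase_of_mem (Finset.mem_filter.mpr ⟨hu, h⟩)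
    · exact congrArg Finset.card (Finset.erase_eq_of_notMem (by simp [h]))
  have hle : u ≤ v → 1 ≤ posIn W v := fun h => Finset.card_pos.mpr ⟨u, by simp [hu, h]⟩
  unfold idxFun
  rw [hpos]
  split_ifs <;> omega

lemma part_erase {W : Finset ℕ} {u t : ℕ} (hu : u ∈ W) (ht : t = u ∨ t = u + 1) (ε : ℕ) :
    part (W.erase u) ε = (cutPart W t ε).erase u := by
  ext v
  by_cases hv : v = u
  · simp [hv, part]
  · have : (if t ≤ v then 1 else 0) = if u < v then 1 else 0 := by split_ifs <;> omega
    rw [Finset.mem_erase, cutPart, Finset.mem_filter, part, Finset.mem_filter, Finset.mem_erase,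
      idxFun_erase hu hv, cutIdx, this]
    tauto

lemma mem_cutPart_iff {W : Finset ℕ} {u t : ℕ} (hu : u ∈ W) (ε : ℕ) :
    u ∈ cutPart W t ε ↔ cutIdx W t u = ε := by
  simp [cutPart, hu]

lemma cutPart_succ_of_notMem {W : Finset ℕ} {t : ℕ} (ht : t ∉ W) (ε : ℕ) :
    cutPart W (t + 1) ε = cutPart W t ε := by
  refine Finset.filter_congr fun v hv => ?_
  have : t + 1 ≤ v ↔ t ≤ v :=
    ⟨Nat.le_of_succ_le, fun h => lt_of_le_of_ne h (by rintro rfl; exact ht hv)⟩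
  simp only [cutIdx, this]

lemma cutPart_zero (W : Finset ℕ) {ε : ℕ} (hε : ε ≤ 1) : cutPart W 0 ε = part W (1 - ε) := by
  refine Finset.filter_congr fun v _ => ?_
  have := Nat.mod_lt (v + posIn W v) two_pos
  simp only [cutIdx, idxFun, zero_le, if_true]
  omega

lemma cutPart_of_subset_range {W : Finset ℕ} {N : ℕ} (hW : W ⊆ Finset.range N) (ε : ℕ) :
    cutPart W N ε = part W ε := by
  refine Finset.filter_congr fun v hv => ?_
  have hNv : ¬N ≤ v := by simpa using hW hv
  simp only [cutIdx, hNv, if_false, add_zero, idxFun, Nat.mod_mod]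

lemma insert_part_erase {W : Finset ℕ} {u t ε : ℕ} (hu : u ∈ W) (ht : t = u ∨ t = u + 1)
    (h : cutIdx W t u = ε) : insert u (part (W.erase u) ε) = cutPart W t ε := by
  rw [part_erase hu ht, Finset.insert_erase ((mem_cutPart_iff hu ε).mpr h)]

lemma part_erase_of_cutIdx_ne {W : Finset ℕ} {u t ε : ℕ} (hu : u ∈ W) (ht : t = u ∨ t = u + 1)
    (h : cutIdx W t u ≠ ε) : part (W.erase u) ε = cutPart W t ε := by
  rw [part_erase hu ht, Finset.erase_eq_of_notMem (mt (mem_cutPart_iff hu ε).mp h)]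

lemma add_insert_part_erase {M : Type*} [AddCommMonoid M] (φ : Finset ℕ → Finset ℕ → M)
    {W : Finset ℕ} {u : ℕ} (hu : u ∈ W) :
    φ (insert u (part0 (W.erase u))) (part1 (W.erase u)) +
        φ (part0 (W.erase u)) (insert u (part1 (W.erase u))) =
      φ (cutPart W u 0) (cutPart W u 1) + φ (cutPart W (u + 1) 0) (cutPart W (u + 1) 1) := by
  change φ (insert u (part (W.erase u) 0)) (part (W.erase u) 1) +
    φ (part (W.erase u) 0) (insert u (part (W.erase u) 1)) = _
  have hsucc : cutIdx W (u + 1) u = idxFun W u := by simp [cutIdx, idxFun]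
  have hself : cutIdx W u u = (idxFun W u + 1) % 2 := by simp [cutIdx]
  obtain h | h : idxFun W u = 0 ∨ idxFun W u = 1 := Nat.mod_two_eq_zero_or_one _
  · simp only [h] at hsucc hself
    rw [insert_part_erase hu (Or.inr rfl) hsucc, insert_part_erase hu (Or.inl rfl) hself,
      part_erase_of_cutIdx_ne hu (Or.inr rfl) (by simp [hsucc]),
      part_erase_of_cutIdx_ne hu (Or.inl rfl) (by simp [hself]), add_comm]
  · simp only [h] at hsucc hself
    rw [insert_part_erase hu (Or.inl rfl) hself, insert_part_erase hu (Or.inr rfl) hsucc,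
      part_erase_of_cutIdx_ne hu (Or.inl rfl) (by simp [hself]),
      part_erase_of_cutIdx_ne hu (Or.inr rfl) (by simp [hsucc])]

lemma sum_add_succ_eq_of_subset_range {M : Type*} [AddCommGroup M] [Module (ZMod 2) M]
    (g : ℕ → M) {W : Finset ℕ} {N : ℕ} (hW : W ⊆ Finset.range N)
    (hg : ∀ t ∉ W, g (t + 1) = g t) :
    ∑ u ∈ W, (g u + g (u + 1)) = g 0 + g N := by
  have hstep (t : ℕ) : g t + g (t + 1) = g (t + 1) - g t := by
    rw [ZModModule.sub_eq_add, add_comm]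
  rw [Finset.sum_congr rfl fun t _ => hstep t,
    Finset.sum_subset hW fun t _ ht => by rw [hg t ht, sub_self], Finset.sum_range_sub,
    ZModModule.sub_eq_add, add_comm]

theorem sum_insert_part_erase {M : Type*} [AddCommGroup M] [Module (ZMod 2) M]
    (φ : Finset ℕ → Finset ℕ → M) (W : Finset ℕ) :
    ∑ u ∈ W, (φ (insert u (part0 (W.erase u))) (part1 (W.erase u)) +
        φ (part0 (W.erase u)) (insert u (part1 (W.erase u)))) =
      φ (part0 W) (part1 W) + φ (part1 W) (part0 W) := by
  obtain ⟨N, hN⟩ := W.exists_nat_subset_range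
  let g t := φ (cutPart W t 0) (cutPart W t 1)
  rw [Finset.sum_congr rfl fun u hu => add_insert_part_erase φ hu,
    sum_add_succ_eq_of_subset_range g hN fun t ht => by simp only [g, cutPart_succ_of_notMem ht]]
  simp only [g, cutPart_zero W zero_le_one, cutPart_zero W le_rfl, cutPart_of_subset_range hN]
  exact add_comm _ _

theorem sum_powersetCard_sum_sdiff {α M : Type*} [DecidableEq α] [AddCommMonoid M]
    (S : Finset α) (q : ℕ) (F : Finset α → α → M) :
    ∑ U ∈ S.powersetCard q, ∑ u ∈ S \ U, F U u =
      ∑ W ∈ S.powersetCard (q + 1), ∑ u ∈ W, F (W.erase u) u := by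
  rw [Finset.sum_sigma', Finset.sum_sigma']
  refine Finset.sum_nbij' (fun p => ⟨insert p.2 p.1, p.2⟩) (fun p => ⟨p.1.erase p.2, p.2⟩)
    ?_ ?_ ?_ ?_ ?_
  · rintro ⟨U, u⟩ hp
    simp only [Finset.mem_sigma, Finset.mem_powersetCard, Finset.mem_sdiff] at hp ⊢
    exact ⟨⟨Finset.insert_subset hp.2.1 hp.1.1,
      by rw [Finset.card_insert_of_notMem hp.2.2, hp.1.2]⟩, Finset.mem_insert_self u U⟩
  · rintro ⟨W, u⟩ hp
    simp only [Finset.mem_sigma, Finset.mem_powersetCard, Finset.mem_sdiff] at hp ⊢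
    exact ⟨⟨(W.erase_subset u).trans hp.1.1, by rw [Finset.card_erase_of_mem hp.2, hp.1.2]; rfl⟩,
      hp.1.1 hp.2, W.notMem_erase u⟩
  · rintro ⟨U, u⟩ hp
    simp only [Finset.mem_sigma, Finset.mem_sdiff] at hp
    simp [Finset.erase_insert hp.2.2]
  · rintro ⟨W, u⟩ hp
    simp only [Finset.mem_sigma] at hp
    simp [Finset.insert_erase hp.2]
  · rintro ⟨U, u⟩ hp
    simp only [Finset.mem_sigma, Finset.mem_sdiff] at hp
    simp [Finset.erase_insert hp.2.2]

end SplitParity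

open SplitParity in
theorem stmt_14_general {V : Type} [LinearOrder V] (n q : ℕ)
    (x : Finset V) :
    ∑ U ∈ Finset.powersetCard q (Finset.range (n + 1)),
        ∑ u ∈ Finset.range (n + 1) \ U,
          (eC (dFace (insert u (part0 U)) x) ⊗ₜ[ZMod 2] eC (dFace (part1 U) x) +
           eC (dFace (part0 U) x) ⊗ₜ[ZMod 2] eC (dFace (insert u (part1 U)) x)) =
      (∑ W ∈ Finset.powersetCard (q + 1) (Finset.range (n + 1)),
          eC (dFace (part0 W) x) ⊗ₜ[ZMod 2] eC (dFace (part1 W) x)) +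
        transp V (∑ W ∈ Finset.powersetCard (q + 1) (Finset.range (n + 1)),
          eC (dFace (part0 W) x) ⊗ₜ[ZMod 2] eC (dFace (part1 W) x)) := by
  rw [sum_powersetCard_sum_sdiff, map_sum, ← Finset.sum_add_distrib]
  refine Finset.sum_congr rfl fun W _ => ?_
  rw [sum_insert_part_erase (fun A B => eC (dFace A x) ⊗ₜ[ZMod 2] eC (dFace B x)) W]
  simp only [transp, LinearEquiv.coe_coe, TensorProduct.comm_tmul]

/-- for `1 ≤ q ≤ n` and an `n`-simplex `x`,
`Σ_{U ∈ P_q(n), ū ∉ U} ( d_{ū.U^0}(x) ⊗ d_{U^1}(x) + d_{U^0}(x) ⊗ d_{ū.U^1}(x) )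
  = (1 + T) Σ_{W ∈ P_{q+1}(n)} d_{W^0}(x) ⊗ d_{W^1}(x)` over `𝔽₂`. -/
theorem stmt_14 {V : Type} [LinearOrder V] (n q : ℕ) (hq1 : 1 ≤ q) (hq2 : q ≤ n)
    (x : Finset V) (hx : x.card = n + 1) :
    ∑ U ∈ Finset.powersetCard q (Finset.range (n + 1)),
        ∑ u ∈ Finset.range (n + 1) \ U,
          (eC (dFace (insert u (part0 U)) x) ⊗ₜ[ZMod 2] eC (dFace (part1 U) x) +
           eC (dFace (part0 U) x) ⊗ₜ[ZMod 2] eC (dFace (insert u (part1 U)) x)) =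
      (∑ W ∈ Finset.powersetCard (q + 1) (Finset.range (n + 1)),
          eC (dFace (part0 W) x) ⊗ₜ[ZMod 2] eC (dFace (part1 W) x)) +
        transp V (∑ W ∈ Finset.powersetCard (q + 1) (Finset.range (n + 1)),
          eC (dFace (part0 W) x) ⊗ₜ[ZMod 2] eC (dFace (part1 W) x)) :=
  stmt_14_general n q x
end
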